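/- Let n ≥ 2, let ε₀ ≥ 0 and σ be real numbers with σ ≥ (n−2)·π/2 + ε₀, and let λ₁ ≥ λ₂ ≥ … ≥ λₙ be real numbers with ∑_{i=1}^n arctan(λᵢ) = σ. Then λ_{n−1} ≥ tan(ε₀/2)/2; in particular, if ε₀ > 0 then λᵢ > 0 for every i ≤ n−1, i.e. at most the smallest eigenvalue λₙ can be nonpositive. -/

import Mathlib

open Real Finset

/-!
Each `arctan λᵢ` is below `π/2`, and the two smallest are at most `arctan λ_{n-1}`, so
`σ ≤ (n-2)π/2 + 2 arctan λ_{n-1}`. Hence `arctan λ_{n-1} ≥ ε₀/2`, i.e. `λ_{n-1} ≥ tan(ε₀/2)`,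
which is positive once `ε₀ > 0`; monotonicity carries this to all `λᵢ` with `i ≤ n-1`.
-/

theorem sum_arctan_le_of_antitone {n : ℕ} {lam : Fin n → ℝ} (hlam : Antitone lam) (k : Fin n) :
    ∑ i, arctan (lam i) ≤ k * (π / 2) + (n - k) * arctan (lam k) := by
  let bound : ℕ → ℝ := fun i ↦ if i < k then π / 2 else arctan (lam k)
  have hterm (i : Fin n) : arctan (lam i) ≤ bound i := by
    by_cases hi : (i : ℕ) < k
    · simpa [bound, hi] using (arctan_lt_pi_div_two _).le
    · simpa [bound, hi] using arctan_strictMono.monotone (hlam (not_lt.mp hi))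
  calc ∑ i, arctan (lam i) ≤ ∑ i : Fin n, bound i := sum_le_sum fun i _ ↦ hterm i
    _ = ∑ i ∈ range k, bound i + ∑ i ∈ Ico (k : ℕ) n, bound i := by
      rw [Fin.sum_univ_eq_sum_range bound, sum_range_add_sum_Ico _ k.is_lt.le]
    _ = k * (π / 2) + (n - k) * arctan (lam k) := by
      rw [sum_congr rfl fun i hi ↦ if_pos (mem_range.mp hi),
        sum_congr rfl fun i hi ↦ if_neg (not_lt.mpr (mem_Ico.mp hi).1)]
      simp [Nat.cast_sub k.is_lt.le]

theorem tan_le_of_le_arctan {x y : ℝ} (hx : -(π / 2) < x) (h : x ≤ arctan y) : tan x ≤ y := by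
  rw [← arctan_le_arctan_iff, arctan_tan hx (h.trans_lt (arctan_lt_pi_div_two y))]
  exact h

/-- If `λ₁ ≥ … ≥ λₙ` satisfy `∑ arctan λᵢ = σ ≥ (n-2)π/2 + ε₀` with `ε₀ ≥ 0`,
then `λ_{n-1} ≥ tan(ε₀/2)/2`; in particular, if `ε₀ > 0` then all eigenvalues
except possibly the smallest one are positive. -/
theorem dHYM_second_smallest_eigenvalue_bound
    (n : ℕ) (hn : 2 ≤ n) (ε₀ σ : ℝ) (hε : 0 ≤ ε₀)
    (hσ : ((n : ℝ) - 2) * π / 2 + ε₀ ≤ σ)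
    (lam : Fin n → ℝ) (hlam : Antitone lam)
    (hsum : ∑ i, Real.arctan (lam i) = σ) :
    Real.tan (ε₀ / 2) / 2 ≤ lam ⟨n - 2, by omega⟩ ∧
      (0 < ε₀ → ∀ i : Fin n, (i : ℕ) < n - 1 → 0 < lam i) := by
  set k : Fin n := ⟨n - 2, by omega⟩
  have hσ_le : σ ≤ ((n : ℝ) - 2) * (π / 2) + 2 * arctan (lam k) := by
    have := sum_arctan_le_of_antitone hlam k
    simp only [k, Nat.cast_sub hn, hsum] at this
    push_cast at this
    linarith
  have hε_le : ε₀ / 2 ≤ arctan (lam k) := by linarith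
  have hε_lt : ε₀ / 2 < π / 2 := hε_le.trans_lt (arctan_lt_pi_div_two _)
  have htan_le : tan (ε₀ / 2) ≤ lam k := tan_le_of_le_arctan (by linarith [pi_pos]) hε_le
  refine ⟨by linarith [tan_nonneg_of_nonneg_of_le_pi_div_two (by linarith) hε_lt.le],
    fun hε_pos i hi ↦ ?_⟩
  have hik : i ≤ k := Fin.le_def.mpr (by simp only [k]; omega)
  exact (tan_pos_of_pos_of_lt_pi_div_two (by linarith) hε_lt).trans_le (htan_le.trans (hlam hik))
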